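/- arXiv:2203.15702 — 5 statements merged into one kernel-verified Lean document; each statement's English description precedes it below -/
import Mathlib

section
/- Define the non-contrastive loss L(W) = Σ_{j=1}^d (2 − 2 E_{D₁,D₂}[⟨ReLU(W D₁ e_j), ReLU(W D₂ e_j)⟩]) where D₁, D₂ are independent diagonal matrices with i.i.d. Bernoulli(α) diagonal entries. Then over the set U of matrices W ∈ R^{d×d} with unit-norm columns, every W ∈ U with all entries nonnegative is a global minimizer of L, and the minimum value is 2d − 2dα². -/
/-- The probability weight of a particular diagonal Bernoulli(α) mask `D`. -/
def maskWeight {d : ℕ} (α : ℝ) (D : Fin d → Bool) : ℝ :=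
  ∏ i, if D i then α else 1 - α

/-- The non-contrastive loss
`L(W) = Σ_j (2 − 2 E_{D₁,D₂} ⟨ReLU(W D₁ e_j), ReLU(W D₂ e_j)⟩)`. -/
noncomputable def nclLoss {d : ℕ} (α : ℝ) (W : Fin d → Fin d → ℝ) : ℝ :=
  ∑ j : Fin d, (2 - 2 * ∑ D₁ : Fin d → Bool, ∑ D₂ : Fin d → Bool,
    maskWeight α D₁ * maskWeight α D₂ *
      ∑ k, max (W k j * (if D₁ j then 1 else 0)) 0 *
            max (W k j * (if D₂ j then 1 else 0)) 0)

lemma sum_mask {d : ℕ} (α : ℝ) (j : Fin d) :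
    ∑ D : Fin d → Bool, maskWeight α D * (if D j then (1:ℝ) else 0) = α := by
  have h : ∀ D : Fin d → Bool, maskWeight α D * (if D j then (1:ℝ) else 0)
      = ∏ i, ((if D i then α else 1 - α) * (if i = j then (if D i then (1:ℝ) else 0) else 1)) := by
    intro D
    rw [Finset.prod_mul_distrib, Finset.prod_ite_eq']
    simp [maskWeight]
  simp_rw [h]
  rw [← Fintype.prod_sum (κ := fun _ : Fin d => Bool)
    (f := fun i b => (if b then α else 1 - α) * (if i = j then (if b then (1:ℝ) else 0) else 1))]
  have : ∀ i : Fin d, (∑ b : Bool, ((if b then α else 1 - α) * (if i = j then (if b then (1:ℝ) else 0) else 1))) = if i = j then α else 1 := by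
    intro i
    by_cases hij : i = j <;> simp [hij]
  simp_rw [this]
  simp

lemma nclLoss_eq {d : ℕ} (α : ℝ) (W : Fin d → Fin d → ℝ) :
    nclLoss α W = ∑ j : Fin d, (2 - 2 * α ^ 2 * ∑ k, max (W k j) 0 ^ 2) := by
  unfold nclLoss
  refine Finset.sum_congr rfl fun j _ => ?_
  have key : ∀ (b₁ b₂ : Bool) (x : ℝ),
      max (x * if b₁ then 1 else 0) 0 * max (x * if b₂ then 1 else 0) 0
        = (if b₁ then (1:ℝ) else 0) * (if b₂ then (1:ℝ) else 0) * max x 0 ^ 2 := by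
    rintro (_|_) (_|_) x <;> simp [sq]
  have hin : ∀ D₁ D₂ : Fin d → Bool,
      (∑ k, max (W k j * if D₁ j then 1 else 0) 0 * max (W k j * if D₂ j then 1 else 0) 0)
        = (if D₁ j then (1:ℝ) else 0) * (if D₂ j then (1:ℝ) else 0) * ∑ k, max (W k j) 0 ^ 2 := by
    intro D₁ D₂
    rw [Finset.mul_sum]
    exact Finset.sum_congr rfl fun k _ => key _ _ _
  simp_rw [hin]
  have : (∑ D₁ : Fin d → Bool, ∑ D₂ : Fin d → Bool,
      maskWeight α D₁ * maskWeight α D₂ *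
        ((if D₁ j then (1:ℝ) else 0) * (if D₂ j then (1:ℝ) else 0) * ∑ k, max (W k j) 0 ^ 2))
      = (∑ D₁ : Fin d → Bool, maskWeight α D₁ * (if D₁ j then (1:ℝ) else 0))
        * (∑ D₂ : Fin d → Bool, maskWeight α D₂ * (if D₂ j then (1:ℝ) else 0))
        * ∑ k, max (W k j) 0 ^ 2 := by
    rw [Finset.sum_mul_sum, Finset.sum_mul]
    refine Finset.sum_congr rfl fun D₁ _ => ?_
    rw [Finset.sum_mul]
    exact Finset.sum_congr rfl fun D₂ _ => by ring
  rw [this, sum_mask]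
  ring

/-- Over the set of matrices with unit-norm columns, every entrywise nonnegative
matrix is a global minimizer of the non-contrastive loss, with minimum value
`2d − 2dα²`. -/
theorem nonneg_is_global_min_of_ncl {d : ℕ} (α : ℝ) (hα : 0 < α) (hα1 : α < 1)
    (W : Fin d → Fin d → ℝ) (hWnorm : ∀ j, ∑ k, (W k j) ^ 2 = 1)
    (hWpos : ∀ k j, 0 ≤ W k j) :
    (∀ W' : Fin d → Fin d → ℝ, (∀ j, ∑ k, (W' k j) ^ 2 = 1) →
      nclLoss α W ≤ nclLoss α W') ∧
    nclLoss α W = 2 * d - 2 * d * α ^ 2 := by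
  have hW : nclLoss α W = 2 * d - 2 * d * α ^ 2 := by
    rw [nclLoss_eq]
    have : ∀ j : Fin d, (∑ k, max (W k j) 0 ^ 2) = 1 := by
      intro j
      rw [← hWnorm j]
      exact Finset.sum_congr rfl fun k _ => by rw [max_eq_left (hWpos k j)]
    simp_rw [this]
    simp
    ring
  refine ⟨fun W' hW' => ?_, hW⟩
  rw [hW, nclLoss_eq]
  have hle : ∀ j : Fin d, 2 - 2 * α ^ 2 ≤ 2 - 2 * α ^ 2 * ∑ k, max (W' k j) 0 ^ 2 := by
    intro j
    have hS : (∑ k, max (W' k j) 0 ^ 2) ≤ 1 := by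
      rw [← hW' j]
      refine Finset.sum_le_sum fun k _ => ?_
      have h1 : |max (W' k j) 0| ≤ |W' k j| := by
        rcases le_or_gt (W' k j) 0 with h | h
        · rw [max_eq_right h]; simp
        · rw [max_eq_left h.le]
      calc max (W' k j) 0 ^ 2 = |max (W' k j) 0| ^ 2 := (sq_abs _).symm
        _ ≤ |W' k j| ^ 2 := by nlinarith [abs_nonneg (max (W' k j) 0)]
        _ = (W' k j) ^ 2 := sq_abs _
    nlinarith [sq_nonneg α]
  calc (2 * d - 2 * d * α ^ 2 : ℝ) = ∑ _j : Fin d, (2 - 2 * α ^ 2) := by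
        simp; ring
    _ ≤ _ := Finset.sum_le_sum fun j _ => hle j
end

section
/- Consider the recursion A_{t+1} = λ A_t + c_t B_t, B_{t+1} = λ B_t + c_t A_t with λ ∈ (0,1) and c_t ∈ (0,λ). Then A_t = C_{1,t} A₀ + C_{2,t}(A₀ + B₀), where C_{1,t} = ∏_{i=0}^{t-1}(λ − c_i) ∈ (0,1) for t ≥ 1 and C_{2,t} = Σ_{j=0}^{t-1} c_j ∏_{i=j+1}^{t-1}(λ − c_i) ∏_{i=0}^{j-1}(λ + c_i) > 0 for t ≥ 1. -/
open Finset

/-- For the coupled recursion `A_{t+1} = λ A_t + c_t B_t`, `B_{t+1} = λ B_t + c_t A_t`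
with `λ ∈ (0,1)`, `c_t ∈ (0,λ)`, we have
`A_t = C_{1,t} A₀ + C_{2,t} (A₀ + B₀)` with
`C_{1,t} = ∏_{i<t}(λ − c_i) ∈ (0,1)` for `t ≥ 1` and
`C_{2,t} = Σ_{j<t} c_j ∏_{i=j+1}^{t-1}(λ − c_i) ∏_{i<j}(λ + c_i) > 0` for `t ≥ 1`. -/
theorem coupled_recursion_closed_form {m d : ℕ} (lam : ℝ) (hlam : 0 < lam)
    (hlam1 : lam < 1) (c : ℕ → ℝ) (hc : ∀ t, 0 < c t ∧ c t < lam)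
    (A B : ℕ → Matrix (Fin m) (Fin d) ℝ)
    (hA : ∀ t, A (t + 1) = lam • A t + c t • B t)
    (hB : ∀ t, B (t + 1) = lam • B t + c t • A t) :
    ∀ t, A t = (∏ i ∈ Finset.range t, (lam - c i)) • A 0 +
        (∑ j ∈ Finset.range t, c j * (∏ i ∈ Finset.Ico (j + 1) t, (lam - c i)) *
          ∏ i ∈ Finset.range j, (lam + c i)) • (A 0 + B 0) ∧
      (1 ≤ t → 0 < ∏ i ∈ Finset.range t, (lam - c i) ∧
        (∏ i ∈ Finset.range t, (lam - c i)) < 1) ∧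
      (1 ≤ t → 0 < ∑ j ∈ Finset.range t, c j *
          (∏ i ∈ Finset.Ico (j + 1) t, (lam - c i)) *
          ∏ i ∈ Finset.range j, (lam + c i)) := by
  set P : ℕ → ℝ := fun t => ∏ i ∈ Finset.range t, (lam - c i) with hP
  set Q : ℕ → ℝ := fun t => ∏ i ∈ Finset.range t, (lam + c i) with hQ
  set D : ℕ → ℝ := fun t => ∑ j ∈ Finset.range t, c j *
      (∏ i ∈ Finset.Ico (j + 1) t, (lam - c i)) * ∏ i ∈ Finset.range j, (lam + c i)
    with hD
  -- recursion for D
  have hDrec : ∀ t, D (t + 1) = (lam - c t) * D t + c t * Q t := by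
    intro t
    simp only [hD, hQ]
    rw [Finset.sum_range_succ]
    have hcong : ∀ j ∈ Finset.range t,
        c j * (∏ i ∈ Finset.Ico (j + 1) (t + 1), (lam - c i)) *
          ∏ i ∈ Finset.range j, (lam + c i)
        = (lam - c t) * (c j * (∏ i ∈ Finset.Ico (j + 1) t, (lam - c i)) *
          ∏ i ∈ Finset.range j, (lam + c i)) := by
      intro j hj
      rw [Finset.prod_Ico_succ_top (Finset.mem_range.mp hj)]
      ring
    rw [Finset.sum_congr rfl hcong, ← Finset.mul_sum, Finset.Ico_self, Finset.prod_empty]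
    ring
  -- P + 2 D = Q
  have hPDQ : ∀ t, P t + 2 * D t = Q t := by
    intro t
    induction t with
    | zero => simp [hP, hQ, hD]
    | succ n ih =>
      have hPn : P (n + 1) = P n * (lam - c n) := by
        simp only [hP]; rw [Finset.prod_range_succ]
      have hQn : Q (n + 1) = Q n * (lam + c n) := by
        simp only [hQ]; rw [Finset.prod_range_succ]
      rw [hPn, hQn, hDrec n, ← ih]; ring
  -- main formula with B version, by induction
  have key : ∀ t, A t = P t • A 0 + D t • (A 0 + B 0) ∧
      B t = P t • B 0 + D t • (A 0 + B 0) := by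
    intro t
    induction t with
    | zero => simp [hP, hD]
    | succ n ih =>
      obtain ⟨ihA, ihB⟩ := ih
      have hPn : P (n + 1) = (lam - c n) * P n := by
        simp only [hP]; rw [Finset.prod_range_succ]; ring
      have hQn := hPDQ n
      constructor
      · rw [hA n, ihA, ihB, hPn, hDrec n, ← hQn]
        module
      · rw [hB n, ihA, ihB, hPn, hDrec n, ← hQn]
        module
  intro t
  refine ⟨(key t).1, fun ht => ⟨?_, ?_⟩, fun ht => ?_⟩
  · exact Finset.prod_pos fun i _ => sub_pos.mpr (hc i).2
  · calc ∏ i ∈ Finset.range t, (lam - c i)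
        < ∏ i ∈ Finset.range t, (1 : ℝ) := by
          apply Finset.prod_lt_prod_of_nonempty
          · intro i _; exact sub_pos.mpr (hc i).2
          · intro i _
            have := (hc i).1
            linarith
          · exact Finset.nonempty_range_iff.mpr (by omega)
      _ = 1 := by simp
  · apply Finset.sum_pos
    · intro j hj
      apply mul_pos (mul_pos (hc j).1 _)
      · exact Finset.prod_pos fun i _ => by linarith [(hc i).1, hlam]
      · exact Finset.prod_pos fun i _ => sub_pos.mpr (hc i).2
    · exact Finset.nonempty_range_iff.mpr (by omega)
end

section
/- Convergence of proportional update with normalization: fix a ∈ R, d ≥ 2, c > 0, and a sequence c^(t) > c. Define v^(t+1) by first setting w₁ = v^(t)₁ + c^(t), w_i = v^(t)_i + a c^(t) for i = 2..d, then v^(t+1) = w/‖w‖₂. Suppose ‖v^(0)‖₂ = 1 and v^(0)₁ + a Σ_{i=2}^d v^(0)_i > 0. Then v^(t) converges to the vector v* with v*₁ = 1/√(1+(d−1)a²) and v*_i = a/√(1+(d−1)a²) for i = 2..d. -/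
open Finset Filter

private lemma sum_expand {n : ℕ} (v0 u : Fin n → ℝ) (S : ℝ) :
    ∑ k, (v0 k + S * u k)^2 =
      ∑ k, v0 k^2 + 2*(∑ k, v0 k * u k)*S + (∑ k, u k^2)*S^2 := by
  have h : ∀ k : Fin n, (v0 k + S*u k)^2 = v0 k^2 + 2*(v0 k*u k)*S + u k^2*S^2 := by
    intro k; ring
  simp_rw [h, Finset.sum_add_distrib, ← Finset.sum_mul, Finset.mul_sum]

/-- Convergence of the proportional update with ℓ₂-normalization: adding `c^(t)` to the
first coordinate and `a c^(t)` to the remaining ones, then normalizing, converges to the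
unit vector proportional to `(1, a, …, a)`.  Here the ambient dimension is `d + 2 ≥ 2`. -/
theorem proportional_update_converges {d : ℕ} (a c : ℝ) (hcpos : 0 < c)
    (c' : ℕ → ℝ) (hc' : ∀ t, c < c' t)
    (v : ℕ → Fin (d + 2) → ℝ)
    (hinit_norm : ∑ i, (v 0 i) ^ 2 = 1)
    (hinit_pos : 0 < v 0 0 + a * ∑ i ∈ Finset.univ.erase 0, v 0 i)
    (hupdate : ∀ t i, v (t + 1) i =
      (v t i + (if i = 0 then c' t else a * c' t)) /
        Real.sqrt (∑ k, (v t k + (if k = 0 then c' t else a * c' t)) ^ 2)) :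
    Filter.Tendsto v Filter.atTop
      (nhds (fun i => if i = 0 then 1 / Real.sqrt (1 + ((d : ℝ) + 1) * a ^ 2)
        else a / Real.sqrt (1 + ((d : ℝ) + 1) * a ^ 2))) := by
  set u : Fin (d + 2) → ℝ := fun i => if i = 0 then 1 else a with hu
  set m : ℝ := 1 + ((d : ℝ) + 1) * a ^ 2 with hmdef
  have hm : ∑ k, u k ^ 2 = m := by
    rw [Fin.sum_univ_succ]
    simp [hu, Fin.succ_ne_zero, hmdef, mul_comm]
  have hb : ∑ k, v 0 k * u k = v 0 0 + a * ∑ i ∈ Finset.univ.erase 0, v 0 i := by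
    rw [← Finset.add_sum_erase _ _ (Finset.mem_univ (0 : Fin (d+2)))]
    simp only [hu, if_pos rfl, mul_one]
    congr 1
    rw [Finset.mul_sum]
    refine Finset.sum_congr rfl fun k hk => ?_
    rw [if_neg (Finset.ne_of_mem_erase hk), mul_comm]
  set b : ℝ := ∑ k, v 0 k * u k with hbdef
  have hbpos : 0 < b := by rw [hb]; exact hinit_pos
  have hm1 : (1:ℝ) ≤ m := by
    have : 0 ≤ ((d : ℝ) + 1) * a ^ 2 := by positivity
    linarith
  clear_value u b m
  set Q : ℝ → ℝ := fun S => 1 + 2*b*S + m*S^2 with hQdef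
  have hQsum : ∀ S, ∑ k, (v 0 k + S * u k)^2 = Q S := by
    intro S
    rw [sum_expand, hinit_norm, hm, ← hbdef]
  have hQ1 : ∀ S, 0 ≤ S → 1 ≤ Q S := by
    intro S hS
    have h1 : 0 ≤ 2*b*S := by positivity
    have h2 : 0 ≤ m*S^2 := by nlinarith
    simp only [hQdef]; linarith
  -- the scalar sequence
  set s : ℕ → ℝ := fun t => Nat.rec (0:ℝ) (fun t' st => st + c' t' * Real.sqrt (Q st)) t
    with hsdef
  have hs0 : s 0 = 0 := rfl
  have hsucc : ∀ t, s (t+1) = s t + c' t * Real.sqrt (Q (s t)) := fun t => rfl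
  clear_value s Q
  have hsge : ∀ t, 0 ≤ s t ∧ c * t ≤ s t := by
    intro t
    induction t with
    | zero => simp [hs0]
    | succ t ih =>
      have hQs : 1 ≤ Q (s t) := hQ1 _ ih.1
      have hsq : 1 ≤ Real.sqrt (Q (s t)) := by
        rw [show (1:ℝ) = Real.sqrt 1 by simp]
        exact Real.sqrt_le_sqrt hQs
      have hc't := hc' t
      have h1 : c ≤ c' t * Real.sqrt (Q (s t)) := by nlinarith
      constructor
      · rw [hsucc]; nlinarith
      · rw [hsucc]; push_cast; nlinarith [ih.2]
  -- closed form
  have hinv : ∀ t i, v t i = (v 0 i + s t * u i) / Real.sqrt (Q (s t)) := by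
    intro t
    induction t with
    | zero =>
      intro i
      simp [hs0, hQdef]
    | succ t ih =>
      intro i
      have hn : 0 < Real.sqrt (Q (s t)) := by
        have := hQ1 _ (hsge t).1
        exact Real.sqrt_pos.2 (by linarith)
      set n := Real.sqrt (Q (s t)) with hndef
      have hn2 : n^2 = Q (s t) := Real.sq_sqrt (by have := hQ1 _ (hsge t).1; linarith)
      have hif : ∀ j : Fin (d+2), (if j = 0 then c' t else a * c' t) = c' t * u j := by
        intro j; by_cases hj : j = 0 <;> simp [hu, hj, mul_comm]
      have hstep : ∀ j, v t j + (if j = 0 then c' t else a * c' t)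
          = (v 0 j + s (t+1) * u j) / n := by
        intro j
        rw [hif, ih j, hsucc, ← hndef]
        field_simp
        ring
      have hsum : ∑ k, (v t k + (if k = 0 then c' t else a * c' t)) ^ 2
          = Q (s (t+1)) / n^2 := by
        simp_rw [hstep, div_pow, ← Finset.sum_div, hQsum]
      have hQ' : 0 < Q (s (t+1)) := by have := hQ1 _ (hsge (t+1)).1; linarith
      have hB : 0 < Real.sqrt (Q (s (t+1))) := Real.sqrt_pos.2 hQ'
      rw [hupdate, hstep, hsum, Real.sqrt_div hQ'.le, Real.sqrt_sq hn.le]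
      rw [div_div_div_cancel_right₀]
      exact hn.ne'
  -- limits
  have hmpos : 0 < m := by linarith
  have hsqm : 0 < Real.sqrt m := Real.sqrt_pos.2 hmpos
  have hstend : Tendsto s atTop atTop := by
    apply tendsto_atTop_mono (fun t => (hsge t).2)
    exact (tendsto_natCast_atTop_atTop).const_mul_atTop hcpos
  have hf : ∀ i, Tendsto (fun S => (v 0 i + S * u i) / Real.sqrt (Q S)) atTop
      (nhds (u i / Real.sqrt m)) := by
    intro i
    have h1 : Tendsto (fun S : ℝ => v 0 i * S⁻¹ + u i) atTop (nhds (u i)) := by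
      have := (tendsto_inv_atTop_zero (𝕜 := ℝ)).const_mul (v 0 i)
      simpa using this.add (tendsto_const_nhds (x := u i))
    have h2 : Tendsto (fun S : ℝ => Real.sqrt (S⁻¹^2 + 2*b*S⁻¹ + m)) atTop
        (nhds (Real.sqrt m)) := by
      apply (Real.continuous_sqrt.tendsto m).comp
      have hz : Tendsto (fun S : ℝ => S⁻¹^2 + 2*b*S⁻¹ + m) atTop
          (nhds ((0:ℝ)^2 + 2*b*0 + m)) :=
        (((tendsto_inv_atTop_zero (𝕜 := ℝ)).pow 2).add
          ((tendsto_inv_atTop_zero (𝕜 := ℝ)).const_mul (2*b))).add tendsto_const_nhds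
      simpa using hz
    have hmain := h1.div h2 hsqm.ne'
    apply hmain.congr'
    filter_upwards [eventually_gt_atTop (0:ℝ)] with S hS
    have hX : 0 < S⁻¹^2 + 2*b*S⁻¹ + m := by
      have : 0 < 2*b*S⁻¹ := by positivity
      have : 0 ≤ S⁻¹^2 := sq_nonneg _
      positivity
    have hQS : Q S = S^2 * (S⁻¹^2 + 2*b*S⁻¹ + m) := by
      simp only [hQdef]; field_simp
    have hsX : 0 < Real.sqrt (S⁻¹^2 + 2*b*S⁻¹ + m) := Real.sqrt_pos.2 hX
    rw [hQS, Real.sqrt_mul (sq_nonneg S), Real.sqrt_sq hS.le]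
    simp only [Pi.div_apply]
    rw [div_eq_div_iff hsX.ne' (mul_pos hS hsX).ne']
    have hSS : S⁻¹ * S = 1 := inv_mul_cancel₀ hS.ne'
    linear_combination (v 0 i * Real.sqrt (S⁻¹^2 + 2*b*S⁻¹ + m)) * hSS
  rw [tendsto_pi_nhds]
  intro i
  have hcomp := (hf i).comp hstend
  have heq : (if i = 0 then 1 / Real.sqrt m else a / Real.sqrt m) = u i / Real.sqrt m := by
    by_cases hi : i = 0 <;> simp [hu, hi]
  rw [show (nhds (if i = 0 then 1 / Real.sqrt m else a / Real.sqrt m))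
      = nhds (u i / Real.sqrt m) by rw [heq]]
  exact hcomp.congr fun t => (hinv t i).symm
end

section
/- In the setting of the normalized proportional update (v^(t+1) obtained by adding c^(t) to the first coordinate and a·c^(t) to coordinates 2..d, then l₂-normalizing), if ‖v^(0)‖₂ = 1 and v^(0)₁ + a Σ_{i≥2} v^(0)_i > 0 and c^(t) > c > 0 for all t, then v^(t)₁ + a Σ_{i≥2} v^(t)_i > 0 for all t. -/
open Finset

/-- Positivity invariant of the normalized proportional update: if
`v^(0)₁ + a Σ_{i≥2} v^(0)_i > 0` and `‖v^(0)‖₂ = 1`, then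
`v^(t)₁ + a Σ_{i≥2} v^(t)_i > 0` for all `t`.  Ambient dimension `d + 2 ≥ 2`. -/
theorem proportional_update_positivity {d : ℕ} (a c : ℝ) (hcpos : 0 < c)
    (c' : ℕ → ℝ) (hc' : ∀ t, c < c' t)
    (v : ℕ → Fin (d + 2) → ℝ)
    (hinit_norm : ∑ i, (v 0 i) ^ 2 = 1)
    (hinit_pos : 0 < v 0 0 + a * ∑ i ∈ Finset.univ.erase 0, v 0 i)
    (hupdate : ∀ t i, v (t + 1) i =
      (v t i + (if i = 0 then c' t else a * c' t)) /
        Real.sqrt (∑ k, (v t k + (if k = 0 then c' t else a * c' t)) ^ 2)) :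
    ∀ t, 0 < v t 0 + a * ∑ i ∈ Finset.univ.erase 0, v t i := by
  intro t
  induction t with
  | zero => exact hinit_pos
  | succ t ih =>
    have hctpos : 0 < c' t := lt_trans hcpos (hc' t)
    set w : Fin (d + 2) → ℝ :=
      fun i => v t i + (if i = 0 then c' t else a * c' t) with hw
    have hvk : ∀ i, v (t + 1) i = w i / Real.sqrt (∑ k, (w k) ^ 2) := by
      intro i
      simpa [hw] using hupdate t i
    have hcard : (Finset.univ.erase (0 : Fin (d + 2))).card = d + 1 := by
      rw [Finset.card_erase_of_mem (Finset.mem_univ _)]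
      simp
    have hsum_erase : ∑ i ∈ Finset.univ.erase (0 : Fin (d + 2)), w i
        = (∑ i ∈ Finset.univ.erase 0, v t i) + (d + 1) * (a * c' t) := by
      simp only [hw]
      rw [Finset.sum_add_distrib]
      congr 1
      rw [Finset.sum_ite_of_false (fun i hi => Finset.ne_of_mem_erase hi),
        Finset.sum_const, hcard]
      push_cast
      ring
    have hnum : w 0 + a * ∑ i ∈ Finset.univ.erase 0, w i =
        (v t 0 + a * ∑ i ∈ Finset.univ.erase 0, v t i)
          + c' t * (1 + a ^ 2 * (d + 1)) := by
      rw [hsum_erase]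
      simp only [hw]
      simp
      ring
    have hpos : 0 < w 0 + a * ∑ i ∈ Finset.univ.erase 0, w i := by
      rw [hnum]
      have h1 : 0 < 1 + a ^ 2 * ((d : ℝ) + 1) := by positivity
      nlinarith
    have hsumpos : 0 < ∑ k, (w k) ^ 2 := by
      rcases (Finset.sum_nonneg fun k _ => sq_nonneg (w k)).lt_or_eq with h | h
      · exact h
      · exfalso
        have hall := (Finset.sum_eq_zero_iff_of_nonneg
          (fun k _ => sq_nonneg (w k))).mp h.symm
        have hz : ∀ k, w k = 0 := fun k =>
          pow_eq_zero_iff (two_ne_zero) |>.mp (hall k (Finset.mem_univ k))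
        rw [hz 0, Finset.sum_congr rfl (fun i _ => hz i)] at hpos
        simp at hpos
    have hN : 0 < Real.sqrt (∑ k, (w k) ^ 2) := Real.sqrt_pos.mpr hsumpos
    have hsum' : ∑ i ∈ Finset.univ.erase (0 : Fin (d + 2)), v (t + 1) i
        = (∑ i ∈ Finset.univ.erase 0, w i) / Real.sqrt (∑ k, (w k) ^ 2) := by
      simp_rw [hvk]
      rw [Finset.sum_div]
    rw [hvk 0, hsum', ← mul_div_assoc, ← add_div]
    exact div_pos hpos hN
end

section
/- Contraction under normalized proportional update: in the setting above, there exists γ = 1/√(1 + (1+(d−1)a²)c²) ∈ (0,1) such that for all t and all i ∈ {2,...,d}, |v^(t+1)_i − a v^(t+1)₁| < γ |v^(t)_i − a v^(t)₁| whenever v^(t)_i − a v^(t)₁ ≠ 0. -/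
open Finset

/-- Contraction under the normalized proportional update: with
`γ = 1/√(1 + (1+(d−1)a²)c²) ∈ (0,1)` (ambient dimension `d + 2`, so `d−1` is `d+1`),
`|v^(t+1)_i − a v^(t+1)₁| < γ |v^(t)_i − a v^(t)₁|` for all coordinates `i ≠ 1`
whenever the right-hand side is nonzero. -/
theorem proportional_update_contraction {d : ℕ} (a c : ℝ) (hcpos : 0 < c)
    (c' : ℕ → ℝ) (hc' : ∀ t, c < c' t)
    (v : ℕ → Fin (d + 2) → ℝ)
    (hnorm : ∀ t, ∑ i, (v t i) ^ 2 = 1)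
    (hpos : ∀ t, 0 < v t 0 + a * ∑ i ∈ Finset.univ.erase 0, v t i)
    (hupdate : ∀ t i, v (t + 1) i =
      (v t i + (if i = 0 then c' t else a * c' t)) /
        Real.sqrt (∑ k, (v t k + (if k = 0 then c' t else a * c' t)) ^ 2)) :
    (0 < 1 / Real.sqrt (1 + (1 + ((d : ℝ) + 1) * a ^ 2) * c ^ 2)) ∧
    (1 / Real.sqrt (1 + (1 + ((d : ℝ) + 1) * a ^ 2) * c ^ 2) < 1) ∧
    ∀ t, ∀ i : Fin (d + 2), i ≠ 0 → v t i - a * v t 0 ≠ 0 →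
      |v (t + 1) i - a * v (t + 1) 0| <
        (1 / Real.sqrt (1 + (1 + ((d : ℝ) + 1) * a ^ 2) * c ^ 2)) *
          |v t i - a * v t 0| := by
  set K : ℝ := 1 + (1 + ((d : ℝ) + 1) * a ^ 2) * c ^ 2 with hKdef
  have hK1 : 1 < K := by
    have h1 : (0:ℝ) < c ^ 2 := by positivity
    have h2 : (0:ℝ) ≤ ((d : ℝ) + 1) * a ^ 2 := by positivity
    nlinarith
  have hKpos : (0:ℝ) < K := by linarith
  have hsK1 : 1 < Real.sqrt K := by
    have := Real.sqrt_lt_sqrt (by norm_num : (0:ℝ) ≤ 1) hK1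
    simpa using this
  have hsKpos : 0 < Real.sqrt K := by linarith
  refine ⟨by positivity, by rw [div_lt_one hsKpos]; exact hsK1, ?_⟩
  intro t i hi hne
  set Q : ℝ := ∑ k, (v t k + (if k = 0 then c' t else a * c' t)) ^ 2 with hQdef
  have hct : 0 < c' t := lt_trans hcpos (hc' t)
  -- expand Q
  have hcard : (Finset.univ.erase (0 : Fin (d+2))).card = d + 1 := by
    rw [Finset.card_erase_of_mem (Finset.mem_univ _)]
    simp
  have expand : Q = 1 + 2 * c' t * (v t 0 + a * ∑ k ∈ Finset.univ.erase 0, v t k)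
      + (c' t) ^ 2 * (1 + ((d : ℝ) + 1) * a ^ 2) := by
    have e1 : Q = (∑ k ∈ Finset.univ.erase 0, (v t k + a * c' t) ^ 2)
        + (v t 0 + c' t) ^ 2 := by
      rw [hQdef, ← Finset.sum_erase_add _ _ (Finset.mem_univ (0 : Fin (d+2)))]
      simp only [if_pos rfl]
      congr 1
      exact Finset.sum_congr rfl (fun k hk => by
        rw [if_neg (Finset.ne_of_mem_erase hk)])
    have e2 : (∑ k ∈ Finset.univ.erase 0, (v t k + a * c' t) ^ 2)
        = (∑ k ∈ Finset.univ.erase 0, (v t k) ^ 2)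
          + 2 * (a * c' t) * (∑ k ∈ Finset.univ.erase 0, v t k)
          + ((d : ℝ) + 1) * (a * c' t) ^ 2 := by
      have : ∀ k ∈ Finset.univ.erase (0 : Fin (d+2)),
          (v t k + a * c' t) ^ 2
            = (v t k) ^ 2 + 2 * (a * c' t) * v t k + (a * c' t) ^ 2 := by
        intro k _; ring
      rw [Finset.sum_congr rfl this, Finset.sum_add_distrib, Finset.sum_add_distrib,
        Finset.sum_const, hcard, ← Finset.mul_sum]
      ring
    have e3 : (∑ k ∈ Finset.univ.erase 0, (v t k) ^ 2) + (v t 0) ^ 2 = 1 := by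
      rw [Finset.sum_erase_add _ _ (Finset.mem_univ (0 : Fin (d+2)))]
      exact hnorm t
    rw [e1, e2]
    nlinarith [e3]
  have hQK : K < Q := by
    have hmid : 0 < 2 * c' t * (v t 0 + a * ∑ k ∈ Finset.univ.erase 0, v t k) := by
      have := hpos t
      positivity
    have hc2 : c ^ 2 < (c' t) ^ 2 := by nlinarith [hc' t]
    have hcoef : (0:ℝ) < 1 + ((d : ℝ) + 1) * a ^ 2 := by positivity
    rw [expand, hKdef]
    nlinarith
  have hQpos : 0 < Q := lt_trans hKpos hQK
  have hsQ : Real.sqrt K < Real.sqrt Q := Real.sqrt_lt_sqrt (le_of_lt hKpos) hQK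
  have hsQpos : 0 < Real.sqrt Q := lt_trans hsKpos hsQ
  -- numerator identity
  have hnum : v (t+1) i - a * v (t+1) 0 = (v t i - a * v t 0) / Real.sqrt Q := by
    rw [hupdate t i, hupdate t 0, if_neg hi, if_pos rfl, ← hQdef]
    field_simp
    ring
  rw [hnum, abs_div, abs_of_pos hsQpos]
  calc |v t i - a * v t 0| / Real.sqrt Q
      < |v t i - a * v t 0| / Real.sqrt K :=
        div_lt_div_of_pos_left (abs_pos.mpr hne) hsKpos hsQ
    _ = 1 / Real.sqrt K * |v t i - a * v t 0| := by ring
end
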